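/- arXiv:2605.17568 — 2 statements merged into one kernel-verified Lean document; each statement's English description precedes it below -/
import Mathlib

section
/- For fixed real numbers a ≤ b and x < a, the soft-clipping function clip_s(x;a,b) = s·log(e^{x/s} + e^{a/s}) − s·log(e^{(x−b)/s} + 1) converges to a as s → 0⁺. -/
/-! Factoring `exp (a / s)` out of the first logarithm gives
`softClip s x a b = a + s log (exp ((x - a) / s) + 1) - s log (exp ((x - b) / s) + 1)`.
Both `x - a` and `x - b` are negative, so both exponentials tend to `0` as `s → 0⁺`;
each logarithm then tends to `log 1 = 0` and the factor `s` kills it. -/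

open Real Filter Set

noncomputable def softClip (s x a b : ℝ) : ℝ :=
  s * Real.log (Real.exp (x / s) + Real.exp (a / s)) -
    s * Real.log (Real.exp ((x - b) / s) + 1)

open Topology

theorem tendsto_exp_div_nhdsGT_zero {c : ℝ} (hc : c < 0) :
    Tendsto (fun s : ℝ => exp (c / s)) (𝓝[>] 0) (𝓝 0) := by
  simp only [div_eq_mul_inv]
  exact tendsto_exp_atBot.comp (tendsto_inv_nhdsGT_zero.const_mul_atTop_of_neg hc)

theorem tendsto_mul_log_exp_div_add_one {c : ℝ} (hc : c < 0) :
    Tendsto (fun s : ℝ => s * log (exp (c / s) + 1)) (𝓝[>] 0) (𝓝 0) := by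
  have hlog : Tendsto (fun s : ℝ => log (exp (c / s) + 1)) (𝓝[>] 0) (𝓝 0) := by
    simpa using ((tendsto_exp_div_nhdsGT_zero hc).add_const 1).log (by norm_num)
  simpa using (tendsto_nhdsWithin_of_tendsto_nhds tendsto_id).mul hlog

theorem softClip_eq {s : ℝ} (hs : s ≠ 0) (x a b : ℝ) :
    softClip s x a b =
      a + s * log (exp ((x - a) / s) + 1) - s * log (exp ((x - b) / s) + 1) := by
  have hfactor : exp (x / s) + exp (a / s) = exp (a / s) * (exp ((x - a) / s) + 1) := by
    rw [mul_add, mul_one, ← exp_add, sub_div, add_sub_cancel]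
  rw [softClip, hfactor, log_mul (exp_ne_zero _) (by positivity), log_exp, mul_add,
    mul_div_cancel₀ a hs]

theorem softClip_tendsto_left (a b x : ℝ) (hab : a ≤ b) (hx : x < a) :
    Tendsto (fun s : ℝ => softClip s x a b) (nhdsWithin 0 (Set.Ioi 0)) (nhds a) := by
  have hlim : Tendsto (fun s : ℝ =>
      a + s * log (exp ((x - a) / s) + 1) - s * log (exp ((x - b) / s) + 1))
      (𝓝[>] 0) (𝓝 a) := by
    simpa using ((tendsto_mul_log_exp_div_add_one (sub_neg.2 hx)).const_add a).sub
      (tendsto_mul_log_exp_div_add_one (sub_neg.2 (hx.trans_le hab)))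
  refine hlim.congr' ?_
  filter_upwards [self_mem_nhdsWithin] with s hs
  exact (softClip_eq (ne_of_gt hs) x a b).symm
end

section
/- For x in the interior of the clipping interval, a < x < b, and fixed s with 0 < s, the soft-clipping function satisfies |clip_s(x;a,b) − x| ≤ 2s·log 2; in particular the approximation error tends to 0 uniformly on compact subsets of (a,b) as s → 0⁺. -/
/-!
Write `L_s(x, y) = s log (e^{x/s} + e^{y/s})`, so that `softClip s x a b = L_s(x, a) - L_s(x - b, 0)`.
Since `e^{max/s} ≤ e^{x/s} + e^{y/s} ≤ 2 e^{max/s}`, `L_s(x, y)` lies within `s log 2` above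
`max x y`. For `a ≤ x ≤ b` the first term is therefore in `[x, x + s log 2]` and the second in
`[0, s log 2]`, so `softClip` is within `s log 2` of `x`, uniformly in `x`.
-/

open Real Filter Set

open Topology

section LogSumExp

variable {s : ℝ} (x y : ℝ)

theorem max_le_mul_log_exp_div_add_exp_div (hs : 0 < s) :
    max x y ≤ s * log (exp (x / s) + exp (y / s)) := by
  rw [← div_le_iff₀' hs, ← exp_le_exp, exp_log (by positivity), ← max_div_div_right hs.le,
    exp_monotone.map_max]
  exact max_le (le_add_of_nonneg_right (exp_pos _).le) (le_add_of_nonneg_left (exp_pos _).le)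

theorem mul_log_exp_div_add_exp_div_le (hs : 0 < s) :
    s * log (exp (x / s) + exp (y / s)) ≤ max x y + s * log 2 := by
  have hsum : exp (x / s) + exp (y / s) ≤ 2 * exp (max x y / s) := by
    have hx : exp (x / s) ≤ exp (max x y / s) := by gcongr; exact le_max_left x y
    have hy : exp (y / s) ≤ exp (max x y / s) := by gcongr; exact le_max_right x y
    linarith
  have hlog : log (exp (x / s) + exp (y / s)) ≤ log 2 + max x y / s := by
    calc log (exp (x / s) + exp (y / s)) ≤ log (2 * exp (max x y / s)) :=
          log_le_log (by positivity) hsum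
      _ = log 2 + max x y / s := by rw [log_mul two_ne_zero (exp_pos _).ne', log_exp]
  calc s * log (exp (x / s) + exp (y / s)) ≤ s * (log 2 + max x y / s) := by gcongr
    _ = max x y + s * log 2 := by field_simp; ring

end LogSumExp

theorem abs_softClip_sub_le {s x a b : ℝ} (hs : 0 < s) (hax : a ≤ x) (hxb : x ≤ b) :
    |softClip s x a b - x| ≤ s * log 2 := by
  have hsoftplus : ∀ t, s * log (exp (t / s) + 1) = s * log (exp (t / s) + exp (0 / s)) := by
    simp
  have h₁ := max_le_mul_log_exp_div_add_exp_div x a hs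
  have h₂ := mul_log_exp_div_add_exp_div_le x a hs
  have h₃ := max_le_mul_log_exp_div_add_exp_div (x - b) 0 hs
  have h₄ := mul_log_exp_div_add_exp_div_le (x - b) 0 hs
  rw [max_eq_left hax] at h₁ h₂
  rw [max_eq_right (sub_nonpos.mpr hxb), ← hsoftplus] at h₄
  rw [← hsoftplus] at h₃
  rw [abs_le, softClip]
  constructor <;> linarith [le_max_right (x - b) 0]

theorem Metric.tendstoUniformlyOn_of_dist_le {ι α β : Type*} [PseudoMetricSpace β]
    {F : ι → α → β} {f : α → β} {p : Filter ι} {K : Set α} {bound : ι → ℝ}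
    (hbound : Tendsto bound p (𝓝 0)) (hdist : ∀ᶠ i in p, ∀ x ∈ K, dist (f x) (F i x) ≤ bound i) :
    TendstoUniformlyOn F f p K := by
  rw [Metric.tendstoUniformlyOn_iff]
  intro ε hε
  filter_upwards [hdist, hbound.eventually (gt_mem_nhds hε)] with i hi hiε x hx
  exact (hi x hx).trans_lt hiε

theorem tendstoUniformlyOn_softClip (a b : ℝ) :
    TendstoUniformlyOn (fun s x => softClip s x a b) (fun x => x) (𝓝[>] 0) (Icc a b) := by
  have hbound : Tendsto (fun s : ℝ => s * log 2) (𝓝[>] 0) (𝓝 0) := by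
    simpa using ((continuous_mul_const (log 2)).tendsto 0).mono_left nhdsWithin_le_nhds
  refine Metric.tendstoUniformlyOn_of_dist_le hbound ?_
  filter_upwards [self_mem_nhdsWithin] with s hs x hx
  rw [dist_comm, Real.dist_eq]
  exact abs_softClip_sub_le hs hx.1 hx.2

theorem softClip_error_bound_general (a b : ℝ) :
    (∀ s x : ℝ, 0 < s → a < x → x < b →
      |softClip s x a b - x| ≤ 2 * s * Real.log 2) ∧
    ∀ K : Set ℝ, K ⊆ Set.Ioo a b → IsCompact K →
      TendstoUniformlyOn (fun (s : ℝ) (x : ℝ) => softClip s x a b) (fun x => x)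
        (nhdsWithin 0 (Set.Ioi 0)) K := by
  refine ⟨fun s x hs hax hxb => ?_, fun K hK _ => ?_⟩
  · have hlog2 : 0 ≤ s * log 2 := mul_nonneg hs.le (log_nonneg one_le_two)
    linarith [abs_softClip_sub_le hs hax.le hxb.le]
  · exact (tendstoUniformlyOn_softClip a b).mono (hK.trans Ioo_subset_Icc_self)

theorem softClip_error_bound (a b : ℝ) (hab : a < b) :
    (∀ s x : ℝ, 0 < s → a < x → x < b →
      |softClip s x a b - x| ≤ 2 * s * Real.log 2) ∧
    ∀ K : Set ℝ, K ⊆ Set.Ioo a b → IsCompact K →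
      TendstoUniformlyOn (fun (s : ℝ) (x : ℝ) => softClip s x a b) (fun x => x)
        (nhdsWithin 0 (Set.Ioi 0)) K :=
  softClip_error_bound_general a b
end
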